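/- arXiv:1611.06150 — 5 statements merged into one kernel-verified Lean document; each statement's English description precedes it below -/
import Mathlib

section
/- Correctness of OKCN: Let q, m, g, d be positive integers with m ≥ 2, g ≥ 2, and (2d+1)·m < q·(1 − 1/g). Let q' = lcm(q,m), α = q'/q, β = q'/m. Suppose σ₁, σ₂ ∈ ℤ_q satisfy |σ₁ − σ₂|_q ≤ d. Let e be any integer with −⌊(α−1)/2⌋ ≤ e ≤ ⌊α/2⌋, let σ_A = (α·σ₁ + e) mod q', k₁ = ⌊σ_A/β⌋, v' = σ_A mod β, v = ⌊v'·g/β⌋, and k₂ = ⌊α·σ₂/β − (v + 1/2)/g⌉ mod m. Then k₂ = k₁. -/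
/-!
Write `α σ₂ = α σ₁ + α δ` modulo `q' = α q`, where `|δ| ≤ d`. Since `σ_A = k₁ β + v'` is `α σ₁ + e`
modulo `q' = β m`, the number `α σ₂ / β` is `k₁ + (v' + α δ - e) / β` modulo `m`. The hint `v` locates
`v' / β` to within `1 / (2g)` of `(v + 1/2) / g`, and the condition `(2d + 1) m < q (1 - 1/g)` keeps the
remaining noise `(α δ - e) / β` below `(1 - 1/g) / 2`; so the rounded value is `k₁` modulo `m`.
-/

/-- The cyclic distance `|x|_q`. -/
def cyclicDist (q x : ℤ) : ℤ := min (x % q) (q - x % q)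

lemma exists_abs_le_modEq_add_of_cyclicDist_le {q a b d : ℤ} (hq : 0 < q)
    (h : cyclicDist q (a - b) ≤ d) : ∃ δ, |δ| ≤ d ∧ b ≡ a + δ [ZMOD q] := by
  have hdiv := Int.emod_add_mul_ediv (a - b) q
  have h0 := Int.emod_nonneg (a - b) hq.ne'
  have hlt := Int.emod_lt_of_pos (a - b) hq
  rcases min_le_iff.mp h with h | h
  · exact ⟨-((a - b) % q), abs_le.mpr ⟨by omega, by omega⟩,
      Int.modEq_iff_dvd.mpr ⟨(a - b) / q, by linear_combination -hdiv⟩⟩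
  · exact ⟨q - (a - b) % q, abs_le.mpr ⟨by omega, by omega⟩,
      Int.modEq_iff_dvd.mpr ⟨(a - b) / q + 1, by linear_combination -hdiv⟩⟩

section OrderedField

variable {K : Type*} [Field K] [LinearOrder K] [IsStrictOrderedRing K]

lemma abs_intCast_le_half {n e : ℤ} (h₁ : -((n - 1) / 2) ≤ e) (h₂ : e ≤ n / 2) :
    |(e : K)| ≤ n / 2 := by
  have hle : (2 * e : ℤ) ≤ n := by omega
  have hge : -n ≤ (2 * e : ℤ) := by omega
  have hle' : (2 * e : K) ≤ n := by exact_mod_cast hle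
  have hge' : -n ≤ (2 * e : K) := by exact_mod_cast hge
  exact abs_le.mpr ⟨by linarith, by linarith⟩

lemma abs_div_sub_floor_add_half_div_le [FloorRing K] {a b g : K} (hg : 0 < g) :
    |a / b - (⌊a * g / b⌋ + 1 / 2) / g| ≤ 1 / (2 * g) := by
  set y := a * g / b with hy_def
  have hy : a / b - (⌊y⌋ + 1 / 2) / g = (Int.fract y - 1 / 2) / g := by
    have hab : a / b = y / g := by rw [hy_def, div_right_comm, mul_div_cancel_right₀ _ hg.ne']
    rw [hab, Int.fract]; ring
  have hfract : |Int.fract y - 1 / 2| ≤ 1 / 2 :=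
    abs_le.mpr ⟨by linarith [Int.fract_nonneg y], by linarith [Int.fract_lt_one y]⟩
  rw [hy, abs_div, abs_of_pos hg, div_le_iff₀ hg]
  calc |Int.fract y - 1 / 2| ≤ 1 / 2 := hfract
    _ = 1 / (2 * g) * g := by field_simp

lemma round_eq_of_abs_sub_lt_half [FloorRing K] {x : K} {n : ℤ} (h : |x - n| < 1 / 2) :
    round x = n := by
  obtain ⟨hlo, hhi⟩ := abs_lt.mp h
  rw [round_eq_iff]
  constructor <;> linarith

lemma abs_decode_error_lt {α β q m g d δ e v' v : K} (hα : 0 < α) (hβ : 0 < β) (hm : 0 < m)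
    (hαq : α * q = β * m) (hcon : (2 * d + 1) * m < q * (1 - 1 / g))
    (hv : |v' / β - (v + 1 / 2) / g| ≤ 1 / (2 * g)) (hδ : |δ| ≤ d) (he : |e| ≤ α / 2) :
    |(v' + α * δ - e) / β - (v + 1 / 2) / g| < 1 / 2 := by
  have hratio : α * (2 * d + 1) < β * (1 - 1 / g) := by
    refine lt_of_mul_lt_mul_right ?_ hm.le
    calc α * (2 * d + 1) * m = α * ((2 * d + 1) * m) := by ring
      _ < α * (q * (1 - 1 / g)) := mul_lt_mul_of_pos_left hcon hα
      _ = β * (1 - 1 / g) * m := by rw [← mul_assoc, hαq]; ring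
  have hnoise : |α * δ - e| < β * (1 - 1 / g) / 2 :=
    calc |α * δ - e| ≤ |α * δ| + |e| := abs_sub _ _
      _ ≤ α * d + α / 2 := by rw [abs_mul, abs_of_pos hα]; gcongr
      _ < β * (1 - 1 / g) / 2 := by linarith
  calc |(v' + α * δ - e) / β - (v + 1 / 2) / g|
      = |(v' / β - (v + 1 / 2) / g) + (α * δ - e) / β| := by ring_nf
    _ ≤ |v' / β - (v + 1 / 2) / g| + |α * δ - e| / β := by
        rw [← abs_of_pos hβ, ← abs_div, abs_of_pos hβ]; exact abs_add_le _ _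
    _ < 1 / (2 * g) + β * (1 - 1 / g) / 2 / β :=
        add_lt_add_of_le_of_lt hv (div_lt_div_of_pos_right hnoise hβ)
    _ = 1 / 2 := by field_simp; ring

end OrderedField

lemma exists_mul_eq_emod_add_of_modEq {a q x y δ e : ℤ} (h : y ≡ x + δ [ZMOD q]) :
    ∃ T, a * y = (a * x + e) % (a * q) - e + a * δ + a * q * T := by
  have h' : a * y ≡ (a * x + e) % (a * q) - e + a * δ [ZMOD a * q] :=
    calc a * y ≡ a * (x + δ) [ZMOD a * q] := h.mul_left'
      _ = (a * x + e) + (a * δ - e) := by ring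
      _ ≡ (a * x + e) % (a * q) + (a * δ - e) [ZMOD a * q] :=
          (Int.mod_modEq _ _).symm.add_right _
      _ = (a * x + e) % (a * q) - e + a * δ := by ring
  obtain ⟨T, hT⟩ := Int.modEq_iff_dvd.mp h'.symm
  exact ⟨T, by linear_combination hT⟩

lemma emod_mul_ediv_mem_Ico {x b m : ℤ} (hb : 0 < b) (hm : 0 < m) :
    0 ≤ x % (b * m) / b ∧ x % (b * m) / b < m := by
  have hlt : x % (b * m) < m * b := mul_comm b m ▸ Int.emod_lt_of_pos x (mul_pos hb hm)
  exact ⟨Int.ediv_nonneg (Int.emod_nonneg x (mul_pos hb hm).ne') hb.le,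
    Int.ediv_lt_of_lt_mul hb hlt⟩

theorem stmt_3_general (q m g d : ℕ) (hm : 2 ≤ m) (hg : 2 ≤ g)
    (hcon : ((2 * d + 1) * m : ℝ) < (q : ℝ) * (1 - 1 / (g : ℝ)))
    (q' α β : ℕ) (hq' : q' = Nat.lcm q m) (hα : α = q' / q) (hβ : β = q' / m)
    (σ₁ σ₂ : ℤ)
    (hdist : min ((σ₁ - σ₂) % (q : ℤ)) ((q : ℤ) - (σ₁ - σ₂) % (q : ℤ)) ≤ (d : ℤ))
    (e : ℤ) (he1 : -(((α : ℤ) - 1) / 2) ≤ e) (he2 : e ≤ (α : ℤ) / 2)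
    (σA k₁ v' v k₂ : ℤ)
    (hσA : σA = ((α : ℤ) * σ₁ + e) % (q' : ℤ))
    (hk₁ : k₁ = σA / (β : ℤ)) (hv' : v' = σA % (β : ℤ))
    (hv : v = v' * (g : ℤ) / (β : ℤ))
    (hk₂ : k₂ = round ((α : ℝ) * (σ₂ : ℝ) / (β : ℝ) - ((v : ℝ) + 1/2) / (g : ℝ)) % (m : ℤ)) :
    k₂ = k₁ := by
  have hq : 0 < q := Nat.pos_of_ne_zero <| by
    rintro rfl
    simp only [Nat.cast_zero, zero_mul] at hcon
    exact hcon.not_ge (by positivity)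
  have hαq : α * q = q' := hα ▸ hq' ▸ Nat.div_mul_cancel (Nat.dvd_lcm_left q m)
  have hβm : β * m = q' := hβ ▸ hq' ▸ Nat.div_mul_cancel (Nat.dvd_lcm_right q m)
  have hq'0 : 0 < q' := hq' ▸ Nat.lcm_pos hq (by omega)
  have hα0 : 0 < α := Nat.pos_of_mul_pos_right (hαq ▸ hq'0)
  have hβ0 : 0 < β := Nat.pos_of_mul_pos_right (hβm ▸ hq'0)
  obtain ⟨δ, hδ, hσ₂⟩ := exists_abs_le_modEq_add_of_cyclicDist_le (by exact_mod_cast hq) hdist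
  obtain ⟨T, hT⟩ := exists_mul_eq_emod_add_of_modEq (a := α) (e := e) hσ₂
  rw [← Nat.cast_mul, hαq, ← hσA, ← hβm, Nat.cast_mul] at hT
  have hσA_eq : σA = β * k₁ + v' := by rw [hk₁, hv']; exact (Int.mul_ediv_add_emod σA β).symm
  obtain ⟨hk₁_nonneg, hk₁_lt⟩ : 0 ≤ k₁ ∧ k₁ < m := by
    rw [hk₁, hσA, ← hβm, Nat.cast_mul]; exact emod_mul_ediv_mem_Ico (by omega) (by omega)
  have hvfloor : (v : ℝ) = ⌊(v' : ℝ) * g / β⌋ := by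
    rw [Int.floor_div_natCast, hv]
    exact_mod_cast congrArg (· / (β : ℤ)) (Int.floor_intCast (R := ℝ) (v' * g)).symm
  have herr := abs_decode_error_lt (K := ℝ) (δ := δ) (e := e) (v' := v')
    (by positivity) (by positivity) (by positivity) (by exact_mod_cast hαq.trans hβm.symm) hcon
    (hvfloor ▸ abs_div_sub_floor_add_half_div_le (by positivity))
    (by exact_mod_cast hδ) (abs_intCast_le_half he1 he2)
  have hround : round ((α : ℝ) * σ₂ / β - (v + 1 / 2) / g) = k₁ + T * m := by
    have hTR : (α : ℝ) * σ₂ = β * k₁ + v' - e + α * δ + β * m * T := by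
      exact_mod_cast hσA_eq ▸ hT
    refine round_eq_of_abs_sub_lt_half (lt_of_eq_of_lt (congrArg abs ?_) herr)
    push_cast
    field_simp
    linear_combination (2 * g) * hTR
  rw [hk₂, hround, Int.add_mul_emod_self_right, Int.emod_eq_of_lt hk₁_nonneg hk₁_lt]

/-- Correctness of OKCN. -/
theorem stmt_3 (q m g d : ℕ) (hm : 2 ≤ m) (hg : 2 ≤ g)
    (hcon : ((2 * d + 1) * m : ℝ) < (q : ℝ) * (1 - 1 / (g : ℝ)))
    (q' α β : ℕ) (hq' : q' = Nat.lcm q m) (hα : α = q' / q) (hβ : β = q' / m)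
    (σ₁ σ₂ : ℤ) (h1 : 0 ≤ σ₁ ∧ σ₁ < (q : ℤ)) (h2 : 0 ≤ σ₂ ∧ σ₂ < (q : ℤ))
    (hdist : min ((σ₁ - σ₂) % (q : ℤ)) ((q : ℤ) - (σ₁ - σ₂) % (q : ℤ)) ≤ (d : ℤ))
    (e : ℤ) (he1 : -(((α : ℤ) - 1) / 2) ≤ e) (he2 : e ≤ (α : ℤ) / 2)
    (σA k₁ v' v k₂ : ℤ)
    (hσA : σA = ((α : ℤ) * σ₁ + e) % (q' : ℤ))
    (hk₁ : k₁ = σA / (β : ℤ)) (hv' : v' = σA % (β : ℤ))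
    (hv : v = v' * (g : ℤ) / (β : ℤ))
    (hk₂ : k₂ = round ((α : ℝ) * (σ₂ : ℝ) / (β : ℝ) - ((v : ℝ) + 1/2) / (g : ℝ)) % (m : ℤ)) :
    k₂ = k₁ :=
  stmt_3_general q m g d hm hg hcon q' α β hq' hα hβ σ₁ σ₂ hdist e he1 he2 σA k₁ v' v k₂ hσA hk₁ hv'
    hv hk₂
end

section
/- Correctness of the simplified OKCN (power-of-2 parameters): Let q = m·g with m, g powers of 2 and 2·m·d < q. Suppose σ₁, σ₂ ∈ ℤ_q with |σ₁ − σ₂|_q ≤ d. Let k₁ = ⌊σ₁/g⌋, v = σ₁ mod g, and k₂ = ⌊(σ₂ − v)/g⌉ mod m. Then k₂ = k₁. -/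
/-! Write `σ₁ = g k₁ + v` with `0 ≤ v < g`. Closeness of `σ₁` and `σ₂` modulo `q` means
`σ₂ = σ₁ + e + t q` with `2 |e| ≤ 2 d < g`, so `(σ₂ - v) / g = k₁ + t m + e / g` with `|e / g| < 1/2`.
Rounding therefore returns `k₁ + t m`, and reducing modulo `m` leaves `k₁ ∈ [0, m)`. -/

lemma exists_abs_add_mul_le_of_min_emod_le {x q d : ℤ} (hq : 0 < q)
    (h : min (x % q) (q - x % q) ≤ d) : ∃ t : ℤ, |x + t * q| ≤ d := by
  have hdiv := Int.mul_ediv_add_emod x q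
  have hmod0 : 0 ≤ x % q := Int.emod_nonneg x hq.ne'
  have hmodq : x % q < q := Int.emod_lt_of_pos x hq
  rcases min_le_iff.mp h with h | h
  · refine ⟨-(x / q), ?_⟩
    rw [abs_le]; constructor <;> linarith
  · refine ⟨-(x / q) - 1, ?_⟩
    rw [abs_le]; constructor <;> linarith

lemma round_intCast_mul_add_div {n e g : ℤ} (hg : 0 < g) (he : 2 * |e| < g) :
    round (((g * n + e : ℤ) : ℝ) / g) = n := by
  have hgR : (0 : ℝ) < g := by exact_mod_cast hg
  have heR : 2 * |(e : ℝ)| < g := by exact_mod_cast he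
  have hsplit : ((g * n + e : ℤ) : ℝ) / g = n + e / g := by
    push_cast; field_simp
  have hsmall : |(e : ℝ) / g| < 1 / 2 := by
    rw [abs_div, abs_of_pos hgR, div_lt_iff₀ hgR]; linarith
  obtain ⟨hlo, hhi⟩ := abs_lt.mp hsmall
  rw [hsplit, round_intCast_add, round_eq_zero_iff.mpr ⟨hlo.le, hhi⟩, add_zero]

theorem round_sub_emod_div_emod_eq_ediv {m g σ₁ σ₂ e t : ℤ} (hg : 0 < g)
    (h1 : 0 ≤ σ₁ ∧ σ₁ < m * g) (he : 2 * |e| < g) (h2 : σ₂ = σ₁ + e + t * (m * g)) :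
    round (((σ₂ - σ₁ % g : ℤ) : ℝ) / g) % m = σ₁ / g := by
  have hsplit : σ₂ - σ₁ % g = g * (σ₁ / g + t * m) + e := by
    linear_combination h2 - Int.mul_ediv_add_emod σ₁ g
  have hk0 : 0 ≤ σ₁ / g := Int.ediv_nonneg h1.1 hg.le
  have hkm : σ₁ / g < m := (Int.ediv_lt_iff_lt_mul hg).mpr h1.2
  rw [hsplit, round_intCast_mul_add_div hg he, Int.add_mul_emod_self_right,
    Int.emod_eq_of_lt hk0 hkm]

theorem stmt_4_general (q m g d : ℕ)
    (hq : q = m * g) (hd : 2 * m * d < q)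
    (σ₁ σ₂ : ℤ) (h1 : 0 ≤ σ₁ ∧ σ₁ < (q : ℤ))
    (hdist : min ((σ₁ - σ₂) % (q : ℤ)) ((q : ℤ) - (σ₁ - σ₂) % (q : ℤ)) ≤ (d : ℤ))
    (k₁ v k₂ : ℤ)
    (hk₁ : k₁ = σ₁ / (g : ℤ)) (hv : v = σ₁ % (g : ℤ))
    (hk₂ : k₂ = round (((σ₂ : ℝ) - (v : ℝ)) / (g : ℝ)) % (m : ℤ)) :
    k₂ = k₁ := by
  subst hq
  push_cast at h1 hdist
  have hm : 0 < m := Nat.pos_of_ne_zero (by rintro rfl; simp at hd)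
  have hdg : 2 * d < g := Nat.lt_of_mul_lt_mul_left (a := m) (by linarith)
  have hg : (0 : ℤ) < g := by exact_mod_cast (Nat.zero_le _).trans_lt hdg
  obtain ⟨t, ht⟩ := exists_abs_add_mul_le_of_min_emod_le (by positivity) hdist
  have he : 2 * |σ₂ - σ₁ - t * (m * g)| < g := by
    rw [show σ₂ - σ₁ - t * (m * g) = -(σ₁ - σ₂ + t * (m * g)) by ring, abs_neg]
    omega
  rw [hk₂, hk₁, hv,
    ← round_sub_emod_div_emod_eq_ediv (m := m) (σ₂ := σ₂) (t := t) hg h1 he (by ring)]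
  push_cast; rfl

/-- Correctness of the simplified OKCN with power-of-2 parameters. -/
theorem stmt_4 (a b : ℕ) (q m g d : ℕ) (hm : m = 2 ^ a) (hg : g = 2 ^ b)
    (hq : q = m * g) (hd : 2 * m * d < q)
    (σ₁ σ₂ : ℤ) (h1 : 0 ≤ σ₁ ∧ σ₁ < (q : ℤ)) (h2 : 0 ≤ σ₂ ∧ σ₂ < (q : ℤ))
    (hdist : min ((σ₁ - σ₂) % (q : ℤ)) ((q : ℤ) - (σ₁ - σ₂) % (q : ℤ)) ≤ (d : ℤ))
    (k₁ v k₂ : ℤ)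
    (hk₁ : k₁ = σ₁ / (g : ℤ)) (hv : v = σ₁ % (g : ℤ))
    (hk₂ : k₂ = round (((σ₂ : ℝ) - (v : ℝ)) / (g : ℝ)) % (m : ℤ)) :
    k₂ = k₁ :=
  stmt_4_general q m g d hq hd σ₁ σ₂ h1 hdist k₁ v k₂ hk₁ hv hk₂
end

section
/- Correctness of the power-of-2 AKCN variant: Let q, m be powers of 2 with m | q and 2·m·d < q, and set G = q/m. For σ₁, σ₂ ∈ ℤ_q with |σ₁ − σ₂|_q ≤ d and k₁ ∈ ℤ_m, define v = (σ₁ + k₁·G) mod q and k₂ = ⌊(v − σ₂)/G⌉ mod m. Then k₂ = k₁. -/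
/-!
Write `q = m G`. Up to a multiple of `q`, `v - σ₂ = k₁ G + e` where `e` is the representative
of `σ₁ - σ₂` with `|e| ≤ d`. Since `2 d < G`, dividing by `G` and rounding recovers `k₁` up to
a multiple of `m`, which the final reduction mod `m` removes.
-/

section Rounding

variable {α : Type*} [Field α] [LinearOrder α] [IsStrictOrderedRing α] [FloorRing α]

theorem round_mul_add_div_eq {k e G : ℤ} (hG : 0 < G) (he : 2 * |e| < G) :
    round (((k * G + e : ℤ) : α) / G) = k := by
  have hG' : (0 : α) < G := by exact_mod_cast hG
  have hsmall : |(e : α) / G| < 1 / 2 := by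
    rw [abs_div, abs_of_pos hG', div_lt_iff₀ hG']
    have he' : 2 * |(e : α)| < G := by exact_mod_cast he
    linarith
  rw [round_eq_iff, Set.mem_Ico, Int.cast_add, Int.cast_mul, add_div,
    mul_div_cancel_right₀ _ hG'.ne']
  constructor <;> linarith [abs_lt.mp hsmall]

theorem round_div_modEq_of_modEq {n k e m G : ℤ} (hG : 0 < G) (he : 2 * |e| < G)
    (hn : n ≡ k * G + e [ZMOD m * G]) : round ((n : α) / G) ≡ k [ZMOD m] := by
  obtain ⟨s, hs⟩ := Int.modEq_iff_dvd.mp hn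
  have hn' : n = (k - m * s) * G + e := by linear_combination -hs
  rw [hn', round_mul_add_div_eq hG he, Int.modEq_iff_dvd]
  exact ⟨s, by ring⟩

end Rounding

theorem Int.exists_modEq_abs_le_of_min_emod_le {x q d : ℤ} (hq : 0 < q)
    (h : min (x % q) (q - x % q) ≤ d) : ∃ e, |e| ≤ d ∧ x ≡ e [ZMOD q] := by
  have hr₀ : 0 ≤ x % q := Int.emod_nonneg _ hq.ne'
  have hrq : x % q < q := Int.emod_lt_of_pos _ hq
  rcases min_le_iff.mp h with h | h
  · exact ⟨x % q, by rwa [abs_of_nonneg hr₀], (Int.mod_modEq x q).symm⟩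
  · refine ⟨x % q - q, by rw [abs_of_neg (by omega)]; omega, ?_⟩
    calc x ≡ x % q [ZMOD q] := (Int.mod_modEq x q).symm
      _ ≡ x % q - q [ZMOD q] := by simp [Int.modEq_iff_dvd]

theorem stmt_7_general (q m d G : ℕ)
    (hdvd : m ∣ q) (hd : 2 * m * d < q) (hG : G = q / m)
    (σ₁ σ₂ k₁ : ℤ)
    (hk₁ : 0 ≤ k₁ ∧ k₁ < (m : ℤ))
    (hdist : min ((σ₁ - σ₂) % (q : ℤ)) ((q : ℤ) - (σ₁ - σ₂) % (q : ℤ)) ≤ (d : ℤ))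
    (v k₂ : ℤ)
    (hv : v = (σ₁ + k₁ * (G : ℤ)) % (q : ℤ))
    (hk₂ : k₂ = round (((v : ℝ) - (σ₂ : ℝ)) / (G : ℝ)) % (m : ℤ)) :
    k₂ = k₁ := by
  have hqmG : q = m * G := by rw [hG, Nat.mul_div_cancel' hdvd]
  have hdG : 2 * d < G := Nat.lt_of_mul_lt_mul_left (a := m) (by rw [← hqmG]; linarith)
  obtain ⟨e, he, hσ⟩ := Int.exists_modEq_abs_le_of_min_emod_le (by omega) hdist
  have hv' : v - σ₂ ≡ k₁ * G + e [ZMOD m * G] := by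
    have hvσ : v ≡ σ₁ + k₁ * G [ZMOD q] := hv ▸ Int.mod_modEq _ _
    have hq : (q : ℤ) = m * G := by exact_mod_cast hqmG
    rw [← hq]
    calc v - σ₂ ≡ σ₁ + k₁ * G - σ₂ [ZMOD q] := hvσ.sub_right σ₂
      _ = (σ₁ - σ₂) + k₁ * G := by ring
      _ ≡ e + k₁ * G [ZMOD q] := hσ.add_right _
      _ = k₁ * G + e := by ring
  have hround := round_div_modEq_of_modEq (α := ℝ) (by omega) (by omega) hv'
  push_cast at hround
  rw [hk₂, hround, Int.emod_eq_of_lt hk₁.1 hk₁.2]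

/-- Correctness of the power-of-2 AKCN variant. -/
theorem stmt_7 (a b : ℕ) (q m d G : ℕ) (hq : q = 2 ^ a) (hm : m = 2 ^ b)
    (hdvd : m ∣ q) (hd : 2 * m * d < q) (hG : G = q / m)
    (σ₁ σ₂ k₁ : ℤ)
    (h1 : 0 ≤ σ₁ ∧ σ₁ < (q : ℤ)) (h2 : 0 ≤ σ₂ ∧ σ₂ < (q : ℤ))
    (hk₁ : 0 ≤ k₁ ∧ k₁ < (m : ℤ))
    (hdist : min ((σ₁ - σ₂) % (q : ℤ)) ((q : ℤ) - (σ₁ - σ₂) % (q : ℤ)) ≤ (d : ℤ))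
    (v k₂ : ℤ)
    (hv : v = (σ₁ + k₁ * (G : ℤ)) % (q : ℤ))
    (hk₂ : k₂ = round (((v : ℝ) - (σ₂ : ℝ)) / (G : ℝ)) % (m : ℤ)) :
    k₂ = k₁ :=
  stmt_7_general q m d G hdvd hd hG σ₁ σ₂ k₁ hk₁ hdist v k₂ hv hk₂
end

section
/- Security of AKCN: Fix integers q, m, g ≥ 2. For k ∈ ℤ_m, σ ∈ ℤ_q, define Con(σ, k) = ⌊g·(σ + ⌊k·q/m⌉)/q⌉ mod g. If σ is uniformly distributed over ℤ_q, then for all ṽ ∈ ℤ_g and all k, k' ∈ ℤ_m, Pr[Con(σ, k) = ṽ] = Pr[Con(σ, k') = ṽ]; i.e., the signal value is independent of the key k. -/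
/-!
Writing `s(n) = ⌊g·n/q⌉ mod g`, we have `Con(σ, k) = s(σ + ⌊k·q/m⌉)`. Since `⌊g·(n + q)/q⌉ = ⌊g·n/q⌉ + g`,
the signal `s` is `q`-periodic, so a uniform `σ ∈ ℤ_q` shifted by the key is again uniform on `ℤ_q`,
and the distribution of the signal does not depend on the key.
-/

open Finset Function

theorem card_filter_range_add_of_periodic {p : ℤ → Prop} [DecidablePred p] {q : ℕ}
    (hp : Periodic p q) (t : ℤ) :
    ((range q).filter fun σ : ℕ => p (σ + t)).card = ((range q).filter fun σ : ℕ => p σ).card := by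
  rcases Nat.eq_zero_or_pos q with rfl | hq
  · simp
  set s := (t % q).toNat
  have hts : t = s + (t / q) * q := by
    rw [Int.toNat_of_nonneg (Int.emod_nonneg _ (by omega)), Int.emod_add_ediv_mul]
  have hs (σ : ℤ) : p (σ + t) = p (σ + s) := by
    rw [hts, ← add_assoc]
    simpa using hp.int_mul (t / q) (σ + s)
  have hpn : Periodic (fun n : ℕ => p n) q := fun n => by simpa using hp n
  have hIco : Ico s (s + q) = (range q).map (addRightEmbedding s) := by
    rw [range_eq_Ico, map_add_right_Ico, zero_add, add_comm]
  calc ((range q).filter fun σ : ℕ => p (σ + t)).card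
      = ((Ico s (s + q)).filter fun n : ℕ => p n).card := by
        simp [hIco, filter_map, hs]
    _ = ((range q).filter fun σ : ℕ => p σ).card := by
        rw [Nat.filter_Ico_card_eq_of_periodic _ _ _ hpn, Nat.count_eq_card_filter_range]

noncomputable def akcnSignal (q g : ℕ) (n : ℤ) : ℤ := round ((g : ℝ) * n / q) % g

theorem akcnSignal_periodic (q g : ℕ) : Periodic (akcnSignal q g) q := by
  intro n
  rcases eq_or_ne q 0 with rfl | hq
  · simp
  have hshift : (g : ℝ) * ((n + q : ℤ) : ℝ) / q = g * n / q + (g : ℤ) := by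
    push_cast
    field_simp
  simp only [akcnSignal, hshift, round_add_intCast, Int.add_emod_right]

theorem stmt_8_general (q m g : ℕ) (v k k' : ℤ) :
    ((Finset.range q).filter fun σ : ℕ =>
      round ((g : ℝ) * ((σ : ℝ) +
        ((round ((k : ℝ) * (q : ℝ) / (m : ℝ)) : ℤ) : ℝ)) / (q : ℝ)) % (g : ℤ) = v).card =
    ((Finset.range q).filter fun σ : ℕ =>
      round ((g : ℝ) * ((σ : ℝ) +
        ((round ((k' : ℝ) * (q : ℝ) / (m : ℝ)) : ℤ) : ℝ)) / (q : ℝ)) % (g : ℤ) = v).card := by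
  have hshift (t : ℤ) :
      ((range q).filter fun σ : ℕ => round ((g : ℝ) * ((σ : ℝ) + (t : ℝ)) / q) % (g : ℤ) = v).card =
      ((range q).filter fun σ : ℕ => akcnSignal q g σ = v).card := by
    simpa [akcnSignal] using card_filter_range_add_of_periodic
      ((akcnSignal_periodic q g).comp (· = v)) t
  rw [hshift, hshift]

/-- Security of AKCN: for σ uniform over ℤ_q, the number of σ
producing a given signal value ṽ is the same for any two keys k, k' ∈ ℤ_m,
where Con(σ,k) = ⌊g·(σ + ⌊k·q/m⌉)/q⌉ mod g. -/
theorem stmt_8 (q m g : ℕ) (hq : 2 ≤ q) (hm : 2 ≤ m) (hg : 2 ≤ g)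
    (v k k' : ℤ) (hk : 0 ≤ k ∧ k < (m : ℤ)) (hk' : 0 ≤ k' ∧ k' < (m : ℤ)) :
    ((Finset.range q).filter fun σ : ℕ =>
      round ((g : ℝ) * ((σ : ℝ) +
        ((round ((k : ℝ) * (q : ℝ) / (m : ℝ)) : ℤ) : ℝ)) / (q : ℝ)) % (g : ℤ) = v).card =
    ((Finset.range q).filter fun σ : ℕ =>
      round ((g : ℝ) * ((σ : ℝ) +
        ((round ((k' : ℝ) * (q : ℝ) / (m : ℝ)) : ℤ) : ℝ)) / (q : ℝ)) % (g : ℤ) = v).card :=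
  stmt_8_general q m g v k k'
end

section
/- Block decomposition of negacyclic polynomial multiplication: Let q be a positive integer and consider the ring ℤ_q[x]/(x^{512} + 1). Write f(x) = Σ_{i=0}^{63} fᵢ(x^{64})·xⁱ and g(x) = Σ_{j=0}^{63} gⱼ(x^{64})·xʲ with fᵢ, gⱼ ∈ R = ℤ_q[x]/(x^8 + 1). If h = f·g is written as h(x) = Σ_{k=0}^{63} h_k(x^{64})·x^k with h_k ∈ R, then for each 0 ≤ k ≤ 63: h_k(x) = Σ_{i+j=k} fᵢ(x)·gⱼ(x) + Σ_{i+j=k+64} fᵢ(x)·gⱼ(x)·x, where the products on the right are taken in R = ℤ_q[x]/(x^8 + 1). -/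
/-!
Let `r` be the root of `x⁵¹² + 1` and `ρ` that of `x⁸ + 1`. The elements
`φ (ρ ^ n) * r ^ k = r ^ (64 * n + k)` (`n < 8`, `k < 64`) are distinct members of the power basis
of `ℤ_q[x]/(x⁵¹² + 1)`, so an element `∑ₖ φ(aₖ) rᵏ` determines its coefficients `aₖ ∈ R`.
Expanding `f * g`, the product `fᵢ gⱼ` lands at `r^(i+j)`, and for `i + j ≥ 64` we rewrite
`r^(i+j) = φ ρ * r^(i+j-64)`; this wrap-around is the extra factor `x`.
-/

open Polynomial Finset

namespace PowerBasis

variable {K A B : Type*} [CommRing K] [CommRing A] [CommRing B] [Algebra K A] [Algebra K B]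
  (pbA : PowerBasis K A) (pbB : PowerBasis K B) {m : ℕ} (hdim : pbA.dim * m ≤ pbB.dim)
  (φ : A →ₐ[K] B) (hφ : φ pbA.gen = pbB.gen ^ m)
include hdim hφ

theorem linearIndependent_map_gen_pow_mul_gen_pow :
    LinearIndependent K fun p : Fin pbA.dim × Fin m =>
      φ (pbA.gen ^ (p.1 : ℕ)) * pbB.gen ^ (p.2 : ℕ) := by
  have hfam : (fun p : Fin pbA.dim × Fin m => φ (pbA.gen ^ (p.1 : ℕ)) * pbB.gen ^ (p.2 : ℕ)) =
      pbB.basis ∘ Fin.castLE hdim ∘ finProdFinEquiv := by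
    ext p
    simp only [map_pow, hφ, ← pow_mul, mul_comm, ← pow_add, coe_basis, Function.comp_apply,
      Fin.val_castLE, finProdFinEquiv_apply_val]
  rw [hfam]
  exact pbB.basis.linearIndependent.comp _
    ((Fin.castLE_injective hdim).comp finProdFinEquiv.injective)

theorem eq_zero_of_sum_map_mul_gen_pow_eq_zero (a : Fin m → A)
    (ha : ∑ k, φ (a k) * pbB.gen ^ (k : ℕ) = 0) : a = 0 := by
  have hexpand : ∀ k, φ (a k) * pbB.gen ^ (k : ℕ) =
      ∑ n, pbA.basis.repr (a k) n • (φ (pbA.gen ^ (n : ℕ)) * pbB.gen ^ (k : ℕ)) := by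
    intro k
    conv_lhs => rw [← pbA.basis.sum_repr (a k)]
    simp only [map_sum, map_smul, sum_mul, smul_mul_assoc, coe_basis]
  simp only [hexpand] at ha
  rw [sum_comm, ← Fintype.sum_prod_type'] at ha
  have hcoeff := Fintype.linearIndependent_iff.mp
    (linearIndependent_map_gen_pow_mul_gen_pow pbA pbB hdim φ hφ) _ ha
  funext k
  exact pbA.basis.ext_elem fun n => by simpa using hcoeff (n, k)

end PowerBasis

def convolutionCoeff {A : Type*} [Semiring A] {m : ℕ} (f g : Fin m → A) (n : ℕ) : A :=
  ∑ p ∈ (univ : Finset (Fin m × Fin m)).filter (fun p => p.1.val + p.2.val = n), f p.1 * g p.2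

theorem sum_map_mul_pow_mul_sum_map_mul_pow {A B : Type*} [CommSemiring A] [CommSemiring B]
    (φ : A →+* B) {m : ℕ} {r : B} {ρ : A} (hρ : φ ρ = r ^ m) (f g : Fin m → A) :
    (∑ i, φ (f i) * r ^ (i : ℕ)) * (∑ j, φ (g j) * r ^ (j : ℕ)) =
      ∑ k : Fin m, φ (convolutionCoeff f g k + convolutionCoeff f g (k + m) * ρ) * r ^ (k : ℕ) := by
  let F : Fin m × Fin m → B := fun p => φ (f p.1 * g p.2) * r ^ (p.1.val + p.2.val)
  have hfiber : ∀ k : Fin m, ∑ p : Fin m × Fin m with p.1 + p.2 = k, F p =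
      φ (convolutionCoeff f g k + convolutionCoeff f g (k + m) * ρ) * r ^ (k : ℕ) := by
    intro k
    have hsplit : ∑ p : Fin m × Fin m with p.1 + p.2 = k, F p =
        ∑ p : Fin m × Fin m with p.1.val + p.2.val = (k : ℕ), F p +
          ∑ p : Fin m × Fin m with p.1.val + p.2.val = (k : ℕ) + m, F p := by
      simp only [sum_filter, ← sum_add_distrib, Fin.ext_iff, Fin.val_add_eq_ite]
      refine sum_congr rfl fun p _ => ?_
      have := p.1.isLt; have := p.2.isLt; have := k.isLt
      -- `p.1 + p.2` wraps around modulo `m`, and `p.1.val + p.2.val < 2 * m`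
      split_ifs <;> first | rfl | (exfalso; omega) | simp
    rw [hsplit, convolutionCoeff, convolutionCoeff, map_add, map_mul, hρ, map_sum, map_sum,
      add_mul, sum_mul, sum_mul, sum_mul]
    congr 1 <;> refine sum_congr rfl fun p hp => ?_ <;> simp only [F, (mem_filter.mp hp).2]
    rw [pow_add]; ring
  calc (∑ i, φ (f i) * r ^ (i : ℕ)) * (∑ j, φ (g j) * r ^ (j : ℕ))
      = ∑ p, F p := by
        rw [sum_mul_sum, ← Fintype.sum_prod_type']
        simp only [F, map_mul, pow_add]
        exact sum_congr rfl fun _ _ => by ring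
    _ = ∑ k, ∑ p : Fin m × Fin m with p.1 + p.2 = k, F p := (sum_fiberwise _ _ _).symm
    _ = _ := sum_congr rfl fun k _ => hfiber k

theorem stmt_18_general (q : ℕ)
    (φ : AdjoinRoot ((X : Polynomial (ZMod q)) ^ 8 + 1) →+*
         AdjoinRoot ((X : Polynomial (ZMod q)) ^ 512 + 1))
    (hφ : φ (AdjoinRoot.root ((X : Polynomial (ZMod q)) ^ 8 + 1)) =
      (AdjoinRoot.root ((X : Polynomial (ZMod q)) ^ 512 + 1)) ^ 64)
    (f g h : Fin 64 → AdjoinRoot ((X : Polynomial (ZMod q)) ^ 8 + 1))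
    (hmul :
      (∑ i : Fin 64, φ (f i) *
        (AdjoinRoot.root ((X : Polynomial (ZMod q)) ^ 512 + 1)) ^ (i : ℕ)) *
      (∑ j : Fin 64, φ (g j) *
        (AdjoinRoot.root ((X : Polynomial (ZMod q)) ^ 512 + 1)) ^ (j : ℕ)) =
      ∑ k : Fin 64, φ (h k) *
        (AdjoinRoot.root ((X : Polynomial (ZMod q)) ^ 512 + 1)) ^ (k : ℕ)) :
    ∀ k : Fin 64, h k =
      (∑ p ∈ (Finset.univ : Finset (Fin 64 × Fin 64)).filter
          (fun p => p.1.val + p.2.val = k.val), f p.1 * g p.2) +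
      (∑ p ∈ (Finset.univ : Finset (Fin 64 × Fin 64)).filter
          (fun p => p.1.val + p.2.val = k.val + 64), f p.1 * g p.2) *
        AdjoinRoot.root ((X : Polynomial (ZMod q)) ^ 8 + 1) := by
  -- for `q = 1` the polynomials `X ^ n + 1` are `0`, so the degree count below needs `Nontrivial`
  rcases subsingleton_or_nontrivial (ZMod q) with _ | _
  · have := (AdjoinRoot.mk_surjective (g := (X : (ZMod q)[X]) ^ 8 + 1)).subsingleton
    exact fun _ => Subsingleton.elim _ _
  have hmonic (n : ℕ) (hn : n ≠ 0) : ((X : (ZMod q)[X]) ^ n + 1).Monic := by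
    simpa using monic_X_pow_add_C (1 : ZMod q) hn
  let pb8 := AdjoinRoot.powerBasis' (hmonic 8 (by norm_num))
  let pb512 := AdjoinRoot.powerBasis' (hmonic 512 (by norm_num))
  have hdim : pb8.dim * 64 ≤ pb512.dim := by
    simp only [pb8, pb512, AdjoinRoot.powerBasis'_dim]
    rw [← C_1, natDegree_X_pow_add_C, natDegree_X_pow_add_C]
  let ψ : _ →ₐ[ZMod q] _ := { φ with
    commutes' := RingHom.congr_fun (Subsingleton.elim (φ.comp (algebraMap _ _)) (algebraMap _ _)) }
  have hsum : ∑ k : Fin 64, φ (h k - (convolutionCoeff f g k + convolutionCoeff f g (k + 64) *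
      AdjoinRoot.root _)) * AdjoinRoot.root _ ^ (k : ℕ) = 0 := by
    simp only [map_sub, sub_mul, sum_sub_distrib]
    rw [← hmul, sum_map_mul_pow_mul_sum_map_mul_pow φ hφ]
    exact sub_self _
  have hzero := pb8.eq_zero_of_sum_map_mul_gen_pow_eq_zero pb512 hdim ψ hφ _ hsum
  exact fun k => sub_eq_zero.mp (congrFun hzero k)

/-- Block decomposition of negacyclic polynomial multiplication.
Let S = ℤ_q[x]/(x⁵¹² + 1) and R = ℤ_q[x]/(x⁸ + 1), and let φ : R →+* S be the
ring map sending the root of x⁸+1 to (root of x⁵¹²+1)⁶⁴. If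
f = Σᵢ φ(fᵢ)·xⁱ, g = Σⱼ φ(gⱼ)·xʲ (i,j ∈ {0,…,63}) and their product equals
Σₖ φ(hₖ)·xᵏ, then hₖ = Σ_{i+j=k} fᵢ·gⱼ + (Σ_{i+j=k+64} fᵢ·gⱼ)·x in R. -/
theorem stmt_18 (q : ℕ) (hq : 0 < q)
    (φ : AdjoinRoot ((X : Polynomial (ZMod q)) ^ 8 + 1) →+*
         AdjoinRoot ((X : Polynomial (ZMod q)) ^ 512 + 1))
    (hφ : φ (AdjoinRoot.root ((X : Polynomial (ZMod q)) ^ 8 + 1)) =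
      (AdjoinRoot.root ((X : Polynomial (ZMod q)) ^ 512 + 1)) ^ 64)
    (f g h : Fin 64 → AdjoinRoot ((X : Polynomial (ZMod q)) ^ 8 + 1))
    (hmul :
      (∑ i : Fin 64, φ (f i) *
        (AdjoinRoot.root ((X : Polynomial (ZMod q)) ^ 512 + 1)) ^ (i : ℕ)) *
      (∑ j : Fin 64, φ (g j) *
        (AdjoinRoot.root ((X : Polynomial (ZMod q)) ^ 512 + 1)) ^ (j : ℕ)) =
      ∑ k : Fin 64, φ (h k) *
        (AdjoinRoot.root ((X : Polynomial (ZMod q)) ^ 512 + 1)) ^ (k : ℕ)) :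
    ∀ k : Fin 64, h k =
      (∑ p ∈ (Finset.univ : Finset (Fin 64 × Fin 64)).filter
          (fun p => p.1.val + p.2.val = k.val), f p.1 * g p.2) +
      (∑ p ∈ (Finset.univ : Finset (Fin 64 × Fin 64)).filter
          (fun p => p.1.val + p.2.val = k.val + 64), f p.1 * g p.2) *
        AdjoinRoot.root ((X : Polynomial (ZMod q)) ^ 8 + 1) :=
  stmt_18_general q φ hφ f g h hmul
end
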